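/- arXiv:1706.09040 — 2 statements merged into one kernel-verified Lean document; each statement's English description precedes it below -/
import Mathlib

section
/- If the pair of functions φ, f : I → ℝ solves the functional equation φ((x+y)/2)(f(x)+f(y)) = φ(x)f(x) + φ(y)f(y) for all x, y ∈ I, φ is continuous on I, and Z_f is nonempty, then φ is constant on the set ½((cl̄ Z_f)^c + I), where cl̄ Z_f denotes the closure of Z_f relative to I and (cl̄ Z_f)^c := I \ cl̄ Z_f. -/
open Set Filter Topology

/-!
Write `C` for the closure of the zero set of `f` and `U = I \ C`. Taking `y = z` with `f z = 0`
in the equation gives `φ ((x + z) / 2) = φ x` for `x ∈ U`, and by continuity for all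
`x ∈ I ∩ closure U` and `z ∈ I ∩ C`. Repeatedly halving the distance from `x ∈ U` to the nearest
point `e` of `C` shows `φ x = φ e` for a point `e ∈ I ∩ C ∩ closure U`, and any two such points
satisfy `φ e = φ ((e + e') / 2) = φ e'`; hence `φ` is a constant `c` on `U`. If `u < v` lie in `U`
and their midpoint `m` lies in `C`, let `a` be the last point of `C` before `v` and `b` the first
one after `u`. Then `m` is the midpoint of `a` and `b`, of `u + v - b ∈ U` and `b`, or of
`u + v - a ∈ U` and `a`, and in each case `φ m = c`.
-/

lemma IsClosed.exists_Ioc_subset_compl {α : Type*} [ConditionallyCompleteLinearOrder α]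
    [TopologicalSpace α] [OrderTopology α] {C : Set α} (hC : IsClosed C) {k x : α}
    (hk : k ∈ C) (hkx : k ≤ x) (hx : x ∉ C) : ∃ e ∈ C, k ≤ e ∧ e < x ∧ Ioc e x ⊆ Cᶜ := by
  have hne : (C ∩ Icc k x).Nonempty := ⟨k, hk, le_rfl, hkx⟩
  have hbdd : BddAbove (C ∩ Icc k x) := ⟨x, fun t ht => ht.2.2⟩
  obtain ⟨heC, hke, hex⟩ := (hC.inter isClosed_Icc).csSup_mem hne hbdd
  refine ⟨_, heC, hke, lt_of_le_of_ne hex fun h => hx (h ▸ heC), fun t ht htC => ?_⟩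
  exact (le_csSup hbdd ⟨htC, hke.trans ht.1.le, ht.2⟩).not_gt ht.1

lemma IsClosed.exists_Ico_subset_compl {α : Type*} [ConditionallyCompleteLinearOrder α]
    [TopologicalSpace α] [OrderTopology α] {C : Set α} (hC : IsClosed C) {k x : α}
    (hk : k ∈ C) (hxk : x ≤ k) (hx : x ∉ C) : ∃ e ∈ C, x < e ∧ e ≤ k ∧ Ico x e ⊆ Cᶜ := by
  obtain ⟨e, heC, hke, hex, hsub⟩ := IsClosed.exists_Ioc_subset_compl (α := αᵒᵈ) hC hk hxk hx
  exact ⟨e, heC, hex, hke, fun t ht => hsub ⟨ht.2, ht.1⟩⟩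

lemma Set.OrdConnected.add_div_two_mem {I : Set ℝ} (hI : I.OrdConnected) {x y : ℝ}
    (hx : x ∈ I) (hy : y ∈ I) : (x + y) / 2 ∈ I := by
  rcases le_total x y with h | h
  · exact hI.out hx hy ⟨by linarith, by linarith⟩
  · exact hI.out hy hx ⟨by linarith, by linarith⟩

lemma eq_of_forall_midpoint_eq {ψ : ℝ → ℝ} {S : Set ℝ} {x e : ℝ}
    (hψ : ContinuousWithinAt ψ S e) (hS : ∀ t ∈ S, (t + e) / 2 ∈ S)
    (h : ∀ t ∈ S, ψ ((t + e) / 2) = ψ t) (hx : x ∈ S) : ψ x = ψ e := by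
  set seq : ℕ → ℝ := fun n => e + (x - e) * (1 / 2) ^ n
  have hsucc : ∀ n, seq (n + 1) = (seq n + e) / 2 := fun n => by simp only [seq]; ring
  have hseq : ∀ n, seq n ∈ S ∧ ψ (seq n) = ψ x := by
    intro n
    induction n with
    | zero => simpa [seq] using hx
    | succ n ih => rw [hsucc]; exact ⟨hS _ ih.1, (h _ ih.1).trans ih.2⟩
  have hlim : Tendsto seq atTop (𝓝 e) := by
    simpa [seq] using tendsto_const_nhds.add ((tendsto_pow_atTop_nhds_zero_of_lt_one
      (by norm_num) (by norm_num : (1 / 2 : ℝ) < 1)).const_mul (x - e))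
  have hψlim := hψ.tendsto.comp
    (tendsto_nhdsWithin_iff.2 ⟨hlim, Eventually.of_forall fun n => (hseq n).1⟩)
  exact tendsto_nhds_unique (tendsto_const_nhds.congr fun n => (hseq n).2.symm) hψlim

def SolvesMidpointEq (I : Set ℝ) (φ f : ℝ → ℝ) : Prop :=
  ∀ x ∈ I, ∀ y ∈ I, φ ((x + y) / 2) * (f x + f y) = φ x * f x + φ y * f y

def zeroClosure (I : Set ℝ) (f : ℝ → ℝ) : Set ℝ :=
  closure {z ∈ I | f z = 0}

namespace SolvesMidpointEq

variable {I : Set ℝ} {φ f : ℝ → ℝ}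

lemma midpoint_eq_of_eq_zero (h : SolvesMidpointEq I φ f) {x z : ℝ} (hx : x ∈ I)
    (hfx : f x ≠ 0) (hz : z ∈ I) (hfz : f z = 0) : φ ((x + z) / 2) = φ x :=
  mul_right_cancel₀ hfx (by simpa [hfz] using h x hx z hz)

lemma midpoint_eq_of_mem_closure (h : SolvesMidpointEq I φ f) (hI : I.OrdConnected)
    (hφ : ContinuousOn φ I) {x z : ℝ} (hx : x ∈ I)
    (hxU : x ∈ closure (I \ zeroClosure I f)) (hz : z ∈ I) (hzC : z ∈ zeroClosure I f) :
    φ ((x + z) / 2) = φ x := by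
  set C := zeroClosure I f
  have hEq : EqOn (fun p : ℝ × ℝ => φ ((p.1 + p.2) / 2)) (fun p => φ p.1)
      ((I \ C) ×ˢ {z ∈ I | f z = 0}) := fun p ⟨⟨hp₁, hp₁C⟩, hp₂, hfp₂⟩ =>
    h.midpoint_eq_of_eq_zero hp₁ (fun hf => hp₁C (subset_closure ⟨hp₁, hf⟩)) hp₂ hfp₂
  refine hEq.of_subset_closure (t := (I ∩ closure (I \ C)) ×ˢ (I ∩ C)) ?_ ?_ ?_ ?_
    (show (x, z) ∈ _ from ⟨⟨hx, hxU⟩, hz, hzC⟩)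
  · exact hφ.comp (by fun_prop) fun p hp => hI.add_div_two_mem hp.1.1 hp.2.1
  · exact hφ.comp continuousOn_fst fun p hp => hp.1.1
  · exact prod_mono (fun t ht => ⟨ht.1, subset_closure ht⟩) fun t ht => ⟨ht.1, subset_closure ht⟩
  · rw [closure_prod_eq]
    exact prod_mono inter_subset_right inter_subset_right

lemma exists_eq_of_mem_diff (h : SolvesMidpointEq I φ f) (hI : I.OrdConnected)
    (hφ : ContinuousOn φ I) (hZ : ∃ z ∈ I, f z = 0) {x : ℝ} (hx : x ∈ I \ zeroClosure I f) :
    ∃ e ∈ I, e ∈ zeroClosure I f ∧ e ∈ closure (I \ zeroClosure I f) ∧ φ x = φ e := by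
  obtain ⟨z, hz, hfz⟩ := hZ
  have hzC : z ∈ zeroClosure I f := subset_closure ⟨hz, hfz⟩
  rcases le_total z x with hzx | hxz
  · obtain ⟨e, heC, hze, hex, hsub⟩ := isClosed_closure.exists_Ioc_subset_compl hzC hzx hx.2
    have heI : e ∈ I := hI.out hz hx.1 ⟨hze, hex.le⟩
    have hS : Ioc e x ⊆ I \ zeroClosure I f :=
      fun t ht => ⟨hI.out heI hx.1 ⟨ht.1.le, ht.2⟩, hsub ht⟩
    refine ⟨e, heI, heC, closure_mono hS ?_, ?_⟩
    · rw [closure_Ioc hex.ne]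
      exact left_mem_Icc.2 hex.le
    refine eq_of_forall_midpoint_eq ((hφ e heI).mono (hS.trans sdiff_subset))
      (fun t ht => ⟨by linarith [ht.1], by linarith [ht.1, ht.2]⟩) (fun t ht => ?_) ⟨hex, le_rfl⟩
    exact h.midpoint_eq_of_mem_closure hI hφ (hS ht).1 (subset_closure (hS ht)) heI heC
  · obtain ⟨e, heC, hxe, hez, hsub⟩ := isClosed_closure.exists_Ico_subset_compl hzC hxz hx.2
    have heI : e ∈ I := hI.out hx.1 hz ⟨hxe.le, hez⟩
    have hS : Ico x e ⊆ I \ zeroClosure I f :=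
      fun t ht => ⟨hI.out hx.1 heI ⟨ht.1, ht.2.le⟩, hsub ht⟩
    refine ⟨e, heI, heC, closure_mono hS ?_, ?_⟩
    · rw [closure_Ico hxe.ne]
      exact right_mem_Icc.2 hxe.le
    refine eq_of_forall_midpoint_eq ((hφ e heI).mono (hS.trans sdiff_subset))
      (fun t ht => ⟨by linarith [ht.1, ht.2], by linarith [ht.2]⟩) (fun t ht => ?_) ⟨le_rfl, hxe⟩
    exact h.midpoint_eq_of_mem_closure hI hφ (hS ht).1 (subset_closure (hS ht)) heI heC

lemma eq_of_mem_diff_of_mem_closure (h : SolvesMidpointEq I φ f) (hI : I.OrdConnected)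
    (hφ : ContinuousOn φ I) (hZ : ∃ z ∈ I, f z = 0) {x e : ℝ} (hx : x ∈ I \ zeroClosure I f)
    (he : e ∈ I) (heC : e ∈ zeroClosure I f) (heU : e ∈ closure (I \ zeroClosure I f)) :
    φ x = φ e := by
  obtain ⟨e', he', he'C, he'U, hxe'⟩ := h.exists_eq_of_mem_diff hI hφ hZ hx
  calc φ x = φ e' := hxe'
    _ = φ ((e' + e) / 2) := (h.midpoint_eq_of_mem_closure hI hφ he' he'U he heC).symm
    _ = φ ((e + e') / 2) := by rw [add_comm]
    _ = φ e := h.midpoint_eq_of_mem_closure hI hφ he heU he' he'C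

lemma eq_of_mem_diff (h : SolvesMidpointEq I φ f) (hI : I.OrdConnected)
    (hφ : ContinuousOn φ I) (hZ : ∃ z ∈ I, f z = 0) {x y : ℝ} (hx : x ∈ I \ zeroClosure I f)
    (hy : y ∈ I \ zeroClosure I f) : φ x = φ y := by
  obtain ⟨e, he, heC, heU, hye⟩ := h.exists_eq_of_mem_diff hI hφ hZ hy
  rw [hye]
  exact h.eq_of_mem_diff_of_mem_closure hI hφ hZ hx he heC heU

lemma midpoint_eq_of_lt (h : SolvesMidpointEq I φ f) (hI : I.OrdConnected)
    (hφ : ContinuousOn φ I) (hZ : ∃ z ∈ I, f z = 0) {u v : ℝ} (hu : u ∈ I \ zeroClosure I f)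
    (hv : v ∈ I \ zeroClosure I f) (huv : u < v) : φ ((u + v) / 2) = φ u := by
  have hmI : (u + v) / 2 ∈ I := hI.add_div_two_mem hu.1 hv.1
  by_cases hmC : (u + v) / 2 ∈ zeroClosure I f
  swap
  · exact h.eq_of_mem_diff hI hφ hZ ⟨hmI, hmC⟩ hu
  obtain ⟨a, haC, hma, hav, hsubv⟩ :=
    isClosed_closure.exists_Ioc_subset_compl hmC (by linarith) hv.2
  obtain ⟨b, hbC, hub, hbm, hsubu⟩ :=
    isClosed_closure.exists_Ico_subset_compl hmC (by linarith) hu.2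
  have haI : a ∈ I := hI.out hmI hv.1 ⟨hma, hav.le⟩
  have hbI : b ∈ I := hI.out hu.1 hmI ⟨hub.le, hbm⟩
  have hSv : Ioc a v ⊆ I \ zeroClosure I f :=
    fun t ht => ⟨hI.out haI hv.1 ⟨ht.1.le, ht.2⟩, hsubv ht⟩
  have hSu : Ico u b ⊆ I \ zeroClosure I f :=
    fun t ht => ⟨hI.out hu.1 hbI ⟨ht.1, ht.2.le⟩, hsubu ht⟩
  have haU : a ∈ closure (I \ zeroClosure I f) := by
    refine closure_mono hSv ?_
    rw [closure_Ioc hav.ne]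
    exact left_mem_Icc.2 hav.le
  have hmid : ∀ x y : ℝ, x + y = u + v → y ∈ I → y ∈ zeroClosure I f →
      x ∈ I \ zeroClosure I f → φ ((u + v) / 2) = φ u := by
    intro x y hxy hy hyC hx
    rw [← hxy, h.midpoint_eq_of_mem_closure hI hφ hx.1 (subset_closure hx) hy hyC]
    exact h.eq_of_mem_diff hI hφ hZ hx hu
  rcases lt_trichotomy (a + b) (u + v) with hab | hab | hab
  · exact hmid (u + v - b) b (by ring) hbI hbC (hSv ⟨by linarith, by linarith⟩)
  · rw [← hab, h.midpoint_eq_of_mem_closure hI hφ haI haU hbI hbC]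
    exact (h.eq_of_mem_diff_of_mem_closure hI hφ hZ hu haI haC haU).symm
  · exact hmid (u + v - a) a (by ring) haI haC (hSu ⟨by linarith, by linarith⟩)

lemma midpoint_eq (h : SolvesMidpointEq I φ f) (hI : I.OrdConnected)
    (hφ : ContinuousOn φ I) (hZ : ∃ z ∈ I, f z = 0) {u v : ℝ} (hu : u ∈ I \ zeroClosure I f)
    (hv : v ∈ I) : φ ((u + v) / 2) = φ u := by
  by_cases hvC : v ∈ zeroClosure I f
  · exact h.midpoint_eq_of_mem_closure hI hφ hu.1 (subset_closure hu) hv hvC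
  rcases lt_trichotomy u v with huv | rfl | hvu
  · exact h.midpoint_eq_of_lt hI hφ hZ hu ⟨hv, hvC⟩ huv
  · rw [add_self_div_two]
  · rw [add_comm, h.midpoint_eq_of_lt hI hφ hZ ⟨hv, hvC⟩ hu hvu]
    exact h.eq_of_mem_diff hI hφ hZ ⟨hv, hvC⟩ hu

end SolvesMidpointEq

theorem stmt5_general (I : Set ℝ) (hIconn : I.OrdConnected)
    (φ f : ℝ → ℝ)
    (heq : ∀ x ∈ I, ∀ y ∈ I,
      φ ((x + y) / 2) * (f x + f y) = φ x * f x + φ y * f y)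
    (hφ : ContinuousOn φ I)
    (hZ : ∃ x ∈ I, f x = 0) :
    ∃ c : ℝ, ∀ u ∈ I \ closure {z ∈ I | f z = 0}, ∀ v ∈ I,
      φ ((u + v) / 2) = c := by
  have h : SolvesMidpointEq I φ f := heq
  rcases eq_empty_or_nonempty (I \ zeroClosure I f) with hU | ⟨u₀, hu₀⟩
  · exact ⟨0, fun u hu => (hU.subset hu).elim⟩
  exact ⟨φ u₀, fun u hu v hv =>
    (h.midpoint_eq hIconn hφ hZ hu hv).trans (h.eq_of_mem_diff hIconn hφ hZ hu hu₀)⟩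

/-- If the pair of functions `φ, f : I → ℝ` solves the functional equation
`φ((x+y)/2)(f(x)+f(y)) = φ(x)f(x) + φ(y)f(y)` for all `x, y ∈ I`, `φ` is continuous on `I`,
and `Z_f` is nonempty, then `φ` is constant on the set `½((cl̄ Z_f)^c + I)`, where `cl̄ Z_f`
denotes the closure of `Z_f` relative to `I` and `(cl̄ Z_f)^c := I \ cl̄ Z_f`. -/
theorem stmt5 (I : Set ℝ) (hIopen : IsOpen I) (hIconn : I.OrdConnected)
    (hIne : I.Nonempty) (φ f : ℝ → ℝ)
    (heq : ∀ x ∈ I, ∀ y ∈ I,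
      φ ((x + y) / 2) * (f x + f y) = φ x * f x + φ y * f y)
    (hφ : ContinuousOn φ I)
    (hZ : ∃ x ∈ I, f x = 0) :
    ∃ c : ℝ, ∀ u ∈ I \ closure {z ∈ I | f z = 0}, ∀ v ∈ I,
      φ ((u + v) / 2) = c :=
  stmt5_general I hIconn φ f heq hφ hZ
end

section
/- Suppose the pair of functions φ, f : I → ℝ solves the functional equation φ((x+y)/2)(f(x)+f(y)) = φ(x)f(x) + φ(y)f(y) for all x, y ∈ I, and both φ and f are twice continuously differentiable on I. Then φ''(x)f(x) + 2φ'(x)f'(x) = 0 for all x ∈ I, and consequently the function x ↦ φ'(x)·f(x)² is constant on I. -/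
/-!
Differentiating the functional equation in `x` gives an identity in `x, y`; differentiating that
identity once more in `x` and then putting `y = x` leaves `φ'' f / 2 + φ' f' = 0`. This says that
`(φ' f²)' = f (φ'' f + 2 φ' f')` vanishes, so `φ' f²` is constant on the interval `I`.
-/

open Set Filter

/-- Equation (1) on `I`. -/
def SolvesMidpointEquation (I : Set ℝ) (φ f : ℝ → ℝ) : Prop :=
  ∀ x ∈ I, ∀ y ∈ I, φ ((x + y) / 2) * (f x + f y) = φ x * f x + φ y * f y

theorem Set.OrdConnected.add_div_two_mem_s8 {𝕜 : Type*} [Field 𝕜] [LinearOrder 𝕜]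
    [IsStrictOrderedRing 𝕜] {s : Set 𝕜} (hs : s.OrdConnected) {x y : 𝕜} (hx : x ∈ s)
    (hy : y ∈ s) : (x + y) / 2 ∈ s := by
  rcases le_total x y with hxy | hxy
  · exact hs.out hx hy ⟨by linarith, by linarith⟩
  · exact hs.out hy hx ⟨by linarith, by linarith⟩

theorem HasDerivAt.comp_add_div_two {g : ℝ → ℝ} {g' x y : ℝ}
    (hg : HasDerivAt g g' ((x + y) / 2)) : HasDerivAt (fun x ↦ g ((x + y) / 2)) (g' / 2) x := by
  have hmid : HasDerivAt (fun x : ℝ ↦ (x + y) / 2) (1 / 2) x := by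
    simpa using ((hasDerivAt_id x).add_const y).div_const 2
  rw [div_eq_mul_one_div]
  exact hg.comp x hmid

theorem HasDerivAt.unique_of_eqOn {s : Set ℝ} {u v : ℝ → ℝ} {u' v' x : ℝ} (hs : IsOpen s)
    (hx : x ∈ s) (huv : EqOn u v s) (hu : HasDerivAt u u' x) (hv : HasDerivAt v v' x) :
    u' = v' :=
  (hu.congr_of_eventuallyEq (eventuallyEq_of_mem (hs.mem_nhds hx) huv.symm)).unique hv

theorem hasDerivAt_mul_sq_of_eq_zero {u f : ℝ → ℝ} {u' f' x : ℝ} (hu : HasDerivAt u u' x)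
    (hf : HasDerivAt f f' x) (h : u' * f x + 2 * u x * f' = 0) :
    HasDerivAt (fun x ↦ u x * f x ^ 2) 0 x := by
  refine (hu.mul (hf.pow 2)).congr_deriv ?_
  norm_num
  linear_combination f x * h

namespace SolvesMidpointEquation

variable {I : Set ℝ} {φ f : ℝ → ℝ}

theorem deriv_identity (h : SolvesMidpointEquation I φ f) (hI : IsOpen I) (hIc : I.OrdConnected)
    (hφ : DifferentiableOn ℝ φ I) (hf : DifferentiableOn ℝ f I) {x y : ℝ} (hx : x ∈ I)
    (hy : y ∈ I) :
    deriv φ ((x + y) / 2) / 2 * (f x + f y) + φ ((x + y) / 2) * deriv f x =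
      deriv φ x * f x + φ x * deriv f x := by
  have hφ' {z} (hz : z ∈ I) := (hφ.differentiableAt (hI.mem_nhds hz)).hasDerivAt
  have hf' {z} (hz : z ∈ I) := (hf.differentiableAt (hI.mem_nhds hz)).hasDerivAt
  refine HasDerivAt.unique_of_eqOn hI hx (fun z hz ↦ h z hz y hy) ?_ ?_
  · exact (hφ' (hIc.add_div_two_mem_s8 hx hy)).comp_add_div_two.mul ((hf' hx).add_const _)
  · exact ((hφ' hx).mul (hf' hx)).add_const _

theorem second_order_identity (h : SolvesMidpointEquation I φ f) (hI : IsOpen I) (hIc : I.OrdConnected)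
    (hφ : DifferentiableOn ℝ φ I) (hf : DifferentiableOn ℝ f I)
    (hφ₁ : DifferentiableOn ℝ (deriv φ) I) (hf₁ : DifferentiableOn ℝ (deriv f) I) {x : ℝ}
    (hx : x ∈ I) : deriv (deriv φ) x * f x + 2 * deriv φ x * deriv f x = 0 := by
  have hφ' := (hφ.differentiableAt (hI.mem_nhds hx)).hasDerivAt
  have hf' := (hf.differentiableAt (hI.mem_nhds hx)).hasDerivAt
  have hφ'' := (hφ₁.differentiableAt (hI.mem_nhds hx)).hasDerivAt
  have hf'' := (hf₁.differentiableAt (hI.mem_nhds hx)).hasDerivAt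
  have hxx : (x + x) / 2 = x := by ring
  have hLHS := (((hxx ▸ hφ'').comp_add_div_two.div_const 2).mul (hf'.add_const (f x))).add
    ((hxx ▸ hφ').comp_add_div_two.mul hf'')
  have key := HasDerivAt.unique_of_eqOn hI hx
    (fun z hz ↦ h.deriv_identity hI hIc hφ hf hz hx) hLHS ((hφ''.mul hf').add (hφ'.mul hf''))
  simp only [hxx] at key
  linarith

end SolvesMidpointEquation

theorem stmt8_general (I : Set ℝ) (hIopen : IsOpen I) (hIconn : I.OrdConnected)
    (φ f : ℝ → ℝ)
    (heq : ∀ x ∈ I, ∀ y ∈ I,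
      φ ((x + y) / 2) * (f x + f y) = φ x * f x + φ y * f y)
    (hφ : ContDiffOn ℝ 2 φ I) (hf : ContDiffOn ℝ 2 f I) :
    (∀ x ∈ I, deriv (deriv φ) x * f x + 2 * deriv φ x * deriv f x = 0) ∧
    ∃ c : ℝ, ∀ x ∈ I, deriv φ x * (f x) ^ 2 = c := by
  have hφ₁ := hφ.differentiableOn (by norm_num)
  have hf₁ := hf.differentiableOn (by norm_num)
  have hφ₂ := (hφ.deriv_of_isOpen hIopen (m := 1) (by norm_num)).differentiableOn one_ne_zero
  have hf₂ := (hf.deriv_of_isOpen hIopen (m := 1) (by norm_num)).differentiableOn one_ne_zero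
  have key : ∀ x ∈ I, deriv (deriv φ) x * f x + 2 * deriv φ x * deriv f x = 0 :=
    fun x hx ↦ SolvesMidpointEquation.second_order_identity heq hIopen hIconn hφ₁ hf₁ hφ₂ hf₂ hx
  have hderiv : ∀ x ∈ I, HasDerivAt (fun x ↦ deriv φ x * f x ^ 2) 0 x := fun x hx ↦
    hasDerivAt_mul_sq_of_eq_zero (hφ₂.differentiableAt (hIopen.mem_nhds hx)).hasDerivAt
      (hf₁.differentiableAt (hIopen.mem_nhds hx)).hasDerivAt (key x hx)
  exact ⟨key, hIopen.exists_is_const_of_deriv_eq_zero hIconn.isPreconnected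
    (fun x hx ↦ (hderiv x hx).differentiableAt.differentiableWithinAt)
    (fun x hx ↦ (hderiv x hx).deriv)⟩

/-- Suppose the pair of functions `φ, f : I → ℝ` solves the functional
equation `φ((x+y)/2)(f(x)+f(y)) = φ(x)f(x) + φ(y)f(y)` for all `x, y ∈ I`, and both `φ` and
`f` are twice continuously differentiable on `I`.  Then
`φ''(x)f(x) + 2φ'(x)f'(x) = 0` for all `x ∈ I`, and consequently the function
`x ↦ φ'(x)·f(x)²` is constant on `I`. -/
theorem stmt8 (I : Set ℝ) (hIopen : IsOpen I) (hIconn : I.OrdConnected)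
    (hIne : I.Nonempty) (φ f : ℝ → ℝ)
    (heq : ∀ x ∈ I, ∀ y ∈ I,
      φ ((x + y) / 2) * (f x + f y) = φ x * f x + φ y * f y)
    (hφ : ContDiffOn ℝ 2 φ I) (hf : ContDiffOn ℝ 2 f I) :
    (∀ x ∈ I, deriv (deriv φ) x * f x + 2 * deriv φ x * deriv f x = 0) ∧
    ∃ c : ℝ, ∀ x ∈ I, deriv φ x * (f x) ^ 2 = c :=
  stmt8_general I hIopen hIconn φ f heq hφ hf
end
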